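/- arXiv:2212.07805 — 4 statements merged into one kernel-verified Lean document; each statement's English description precedes it below -/
import Mathlib

section
/- Let C ≤ F_q^n be a linear code with locality r, dimension k, and minimum distance d. Then k + ⌈k/r⌉ ≤ n − d + 2. -/
open Module Submodule

section Aux

variable {K : Type*} [Field K] {V : Type*} [AddCommGroup V] [Module K V]
  [FiniteDimensional K V] {ι : Type*} [DecidableEq ι]

/-- Span of the functionals indexed by a finset. -/
noncomputable def spn (φ : ι → Module.Dual K V) (S : Finset ι) :
    Submodule K (Module.Dual K V) :=
  Submodule.span K (φ '' ↑S)

lemma spn_mono (φ : ι → Module.Dual K V) {S T : Finset ι} (h : S ⊆ T) :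
    spn φ S ≤ spn φ T :=
  Submodule.span_mono (Set.image_mono (by exact_mod_cast h))

lemma mem_spn (φ : ι → Module.Dual K V) {S : Finset ι} {i : ι} (h : i ∈ S) :
    φ i ∈ spn φ S :=
  Submodule.subset_span ⟨i, by simpa using h⟩

lemma spn_union (φ : ι → Module.Dual K V) (S T : Finset ι) :
    spn φ (S ∪ T) = spn φ S ⊔ spn φ T := by
  rw [spn, Finset.coe_union, Set.image_union, Submodule.span_union]; rfl

lemma finrank_spn_le (φ : ι → Module.Dual K V) (S : Finset ι) :
    finrank K (spn φ S) ≤ S.card := by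
  classical
  have h1 : spn φ S = Submodule.span K ↑(S.image φ) := by
    rw [spn, Finset.coe_image]
  rw [h1]
  exact le_trans (finrank_span_finset_le_card (S.image φ)) Finset.card_image_le

lemma finrank_spn_union_le (φ : ι → Module.Dual K V) (S T : Finset ι) :
    finrank K (spn φ (S ∪ T)) ≤ finrank K (spn φ S) + T.card := by
  rw [spn_union]
  exact le_trans (Submodule.finrank_add_le_finrank_add_finrank _ _)
    (by have := finrank_spn_le φ T; omega)

lemma finrank_spn_insert_le (φ : ι → Module.Dual K V) (S : Finset ι) (i : ι) :
    finrank K (spn φ (insert i S)) ≤ finrank K (spn φ S) + 1 := by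
  have h : insert i S = S ∪ {i} := by
    ext j; simp [or_comm]
  rw [h]
  simpa using finrank_spn_union_le φ S {i}

lemma finrank_spn_lt (φ : ι → Module.Dual K V) {S T : Finset ι} {i : ι}
    (hST : S ⊆ T) (hi : φ i ∉ spn φ S) (hiT : φ i ∈ spn φ T) :
    finrank K (spn φ S) < finrank K (spn φ T) := by
  refine Submodule.finrank_lt_finrank_of_lt (lt_of_le_of_ne (spn_mono φ hST) ?_)
  intro h
  exact hi (h ▸ hiT)

/-- If not all functionals of `A` lie in `spn φ S`, we can find one outside. -/
lemma exists_notMem_spn (φ : ι → Module.Dual K V) {S A : Finset ι} {m : ℕ}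
    (h : m ≤ finrank K (spn φ A)) (hS : finrank K (spn φ S) < m) :
    ∃ j ∈ A, φ j ∉ spn φ S := by
  by_contra hcon
  push_neg at hcon
  have hle : spn φ A ≤ spn φ S := by
    rw [spn, Submodule.span_le]
    rintro - ⟨j, hj, rfl⟩
    exact hcon j (by exact_mod_cast hj)
  have := Submodule.finrank_mono hle
  omega

/-- Filling lemma: grow `T` inside `A` one element at a time to reach rank exactly `m`. -/
lemma fill (φ : ι → Module.Dual K V) (m : ℕ) :
    ∀ c : ℕ, ∀ T A : Finset ι, T ⊆ A → finrank K (spn φ T) + c = m →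
      m ≤ finrank K (spn φ A) →
      ∃ T' : Finset ι, T ⊆ T' ∧ T' ⊆ A ∧ finrank K (spn φ T') = m ∧
        T.card + c ≤ T'.card := by
  intro c
  induction c with
  | zero =>
    intro T A hTA hrk _
    refine ⟨T, subset_rfl, hTA, ?_, ?_⟩ <;> omega
  | succ c ih =>
    intro T A hTA hrk hA
    obtain ⟨j, hjA, hj⟩ := exists_notMem_spn (S := T) φ hA (by omega)
    have hjT : j ∉ T := fun h => hj (mem_spn φ h)
    have hlt : finrank K (spn φ T) < finrank K (spn φ (insert j T)) :=
      finrank_spn_lt φ (Finset.subset_insert j T) hj (mem_spn φ (Finset.mem_insert_self j T))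
    have hle : finrank K (spn φ (insert j T)) ≤ finrank K (spn φ T) + 1 :=
      finrank_spn_insert_le φ T j
    obtain ⟨T', h1, h2, h3, h4⟩ := ih (insert j T) A
      (Finset.insert_subset hjA hTA) (by omega) hA
    refine ⟨T', le_trans (Finset.subset_insert j T) h1, h2, h3, ?_⟩
    rw [Finset.card_insert_of_notMem hjT] at h4
    omega

/-- Main growth lemma for the locality bound. -/
lemma grow (φ : ι → Module.Dual K V) (k r : ℕ) (hk : 1 ≤ k)
    (hktop : ∀ S : Finset ι, finrank K (spn φ S) < k → ∃ j, φ j ∉ spn φ S)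
    (hloc : ∀ i : ι, ∃ Si : Finset ι, i ∉ Si ∧ Si.card ≤ r ∧ φ i ∈ spn φ Si) :
    ∀ c : ℕ, ∀ S : Finset ι, ∀ m : ℕ, 1 ≤ c → finrank K (spn φ S) + c = k →
      finrank K (spn φ S) ≤ m * r → finrank K (spn φ S) + m ≤ S.card →
      ∃ T : Finset ι, ∃ m' : ℕ, finrank K (spn φ T) + 1 = k ∧ k ≤ (m' + 1) * r ∧
        k - 1 + m' ≤ T.card := by
  intro c
  induction c using Nat.strong_induction_on with
  | _ c ih =>
    intro S m hc1 hc h1 h2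
    have hrkS : finrank K (spn φ S) < k := by omega
    obtain ⟨i, hi⟩ := hktop S hrkS
    obtain ⟨Si, hiSi, hSicard, hiSp⟩ := hloc i
    set A := S ∪ Si with hA
    have hSA : S ⊆ A := Finset.subset_union_left
    have hiA : φ i ∈ spn φ A := (spn_mono φ Finset.subset_union_right) hiSp
    have hlt : finrank K (spn φ S) < finrank K (spn φ A) :=
      finrank_spn_lt φ hSA hi hiA
    -- rank of A is at most rank S + |Si \ S|
    have hAeq : A = S ∪ (Si \ S) := (Finset.union_sdiff_self_eq_union).symm
    have hrA : finrank K (spn φ A) ≤ finrank K (spn φ S) + (Si \ S).card := by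
      rw [hAeq]; exact finrank_spn_union_le φ S (Si \ S)
    have hrAr : finrank K (spn φ A) ≤ finrank K (spn φ S) + r := by
      have : (Si \ S).card ≤ Si.card := Finset.card_le_card (Finset.sdiff_subset)
      omega
    by_cases hcase : k ≤ finrank K (spn φ A)
    · -- terminal case: fill from S inside A up to rank k - 1
      obtain ⟨T, hT1, hT2, hT3, hT4⟩ := fill φ (k - 1) (k - 1 - finrank K (spn φ S)) S A
        hSA (by omega) (by omega)
      refine ⟨T, m, by omega, by nlinarith, by omega⟩
    · -- recursive case: add Si and i to S
      have hiS : i ∉ S := fun h => hi (mem_spn φ h)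
      set S' := insert i A with hS'
      have hspS' : spn φ S' = spn φ A := by
        apply le_antisymm
        · rw [spn, Submodule.span_le]
          rintro - ⟨j, hj, rfl⟩
          simp only [hS', Finset.coe_insert, Set.mem_insert_iff] at hj
          rcases hj with rfl | hj
          · exact hiA
          · exact mem_spn φ (by exact_mod_cast hj)
        · exact spn_mono φ (Finset.subset_insert i A)
      have hiA' : i ∉ A := by
        simp only [hA, Finset.mem_union]
        push_neg
        exact ⟨hiS, hiSi⟩
      have hcardS' : S'.card = A.card + 1 := Finset.card_insert_of_notMem hiA'
      have hcardA : S.card + (Si \ S).card = A.card := by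
        rw [hAeq]
        exact (Finset.card_union_of_disjoint (Finset.disjoint_sdiff)).symm
      have hrkS' : finrank K (spn φ S') = finrank K (spn φ A) := by rw [hspS']
      refine ih (k - finrank K (spn φ S')) (by omega) S' (m + 1) (by omega) (by omega)
        (by rw [Nat.succ_mul]; linarith) (by omega)

end Aux

/-- `C` has locality `r`: every coordinate `i` has a recovery set of size at most `r`. -/
def HasLocality {F : Type} [Field F] {n : ℕ} (C : Submodule F (Fin n → F)) (r : ℕ) : Prop :=
  ∀ i : Fin n, ∃ S : Finset (Fin n), i ∉ S ∧ S.card ≤ r ∧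
    ∀ x ∈ C, ∀ y ∈ C, (∀ j ∈ S, x j = y j) → x i = y i

/-- `d` is the minimum Hamming distance of the linear code `C`. -/
def IsMinDist {F : Type} [Field F] [DecidableEq F] {n : ℕ}
    (C : Submodule F (Fin n → F)) (d : ℕ) : Prop :=
  (∀ x ∈ C, x ≠ 0 → d ≤ hammingNorm x) ∧ ∃ x ∈ C, x ≠ 0 ∧ hammingNorm x = d

/-- Generalized Singleton Bound: if `C ≤ F_q^n` has locality `r`, dimension `k` and
minimum distance `d`, then `k + ⌈k/r⌉ ≤ n - d + 2`. -/
theorem stmt_2 {F : Type} [Field F] [Fintype F] [DecidableEq F] {n : ℕ}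
    (C : Submodule F (Fin n → F)) (hC : C ≠ ⊥)
    (r k d : ℕ) (hloc : HasLocality C r)
    (hk : Module.finrank F C = k) (hd : IsMinDist C d) :
    (k : ℤ) + ⌈(k : ℚ) / (r : ℚ)⌉ ≤ (n : ℤ) - (d : ℤ) + 2 := by
  classical
  -- the evaluation functionals on C
  set φ : Fin n → Module.Dual F C := fun i => (LinearMap.proj i).comp C.subtype with hφ
  have hφapp : ∀ (i : Fin n) (x : C), φ i x = (x : Fin n → F) i := fun i x => rfl
  have hk1 : 1 ≤ k := by
    rcases Nat.eq_zero_or_pos k with h0 | h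
    · exfalso; exact hC (Submodule.finrank_eq_zero.mp (by rw [hk, h0]))
    · exact h
  -- membership in dualCoannihilator means vanishing on the coordinates
  have hco : ∀ (S : Finset (Fin n)) (x : C),
      x ∈ (spn φ S).dualCoannihilator ↔ ∀ j ∈ S, (x : Fin n → F) j = 0 := by
    intro S x
    rw [Submodule.mem_dualCoannihilator]
    constructor
    · intro h j hj
      exact h (φ j) (mem_spn φ hj)
    · intro h f hf
      rw [spn] at hf
      induction hf using Submodule.span_induction with
      | mem f hfm =>
        obtain ⟨j, hj, rfl⟩ := hfm
        exact h j (by exact_mod_cast hj)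
      | zero => simp
      | add f g _ _ hf hg => simp [hf, hg]
      | smul a f _ hf => simp [hf]
  -- locality in terms of spans of functionals
  have hloc' : ∀ i : Fin n, ∃ Si : Finset (Fin n), i ∉ Si ∧ Si.card ≤ r ∧ φ i ∈ spn φ Si := by
    intro i
    obtain ⟨S, hiS, hcard, hrec⟩ := hloc i
    refine ⟨S, hiS, hcard, ?_⟩
    have : φ i ∈ (spn φ S).dualCoannihilator.dualAnnihilator := by
      rw [Submodule.mem_dualAnnihilator]
      intro x hx
      rw [hco S x] at hx
      have := hrec (x : Fin n → F) x.2 0 C.zero_mem (fun j hj => by simp [hx j hj])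
      simpa [hφapp] using this
    rwa [Subspace.dualCoannihilator_dualAnnihilator_eq] at this
  -- if the span is small, some functional lies outside
  have hktop : ∀ S : Finset (Fin n), finrank F (spn φ S) < k → ∃ j, φ j ∉ spn φ S := by
    intro S hS
    by_contra hcon
    push_neg at hcon
    have hco_bot : (spn φ S).dualCoannihilator = ⊥ := by
      rw [eq_bot_iff]
      intro x hx
      rw [hco S x] at hx
      have hx' := (hco S x).mpr hx
      have hx0 : ∀ j : Fin n, (x : Fin n → F) j = 0 := fun j =>
        (Submodule.mem_dualCoannihilator x).mp hx' (φ j) (hcon j)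
      have : (x : Fin n → F) = 0 := funext hx0
      simpa [Submodule.mem_bot] using Subtype.ext this
    have := Subspace.finrank_add_finrank_dualCoannihilator_eq (spn φ S)
    rw [hco_bot, finrank_bot, hk] at this
    omega
  -- run the growth process
  have hspn_empty : finrank F (spn φ (∅ : Finset (Fin n))) = 0 := by
    rw [spn]
    simp
  obtain ⟨T, m', hT1, hT2, hT3⟩ := grow φ k r hk1 hktop hloc' k ∅ 0
    (by omega) (by omega) (by omega) (by simp [hspn_empty])
  -- r is positive
  have hr1 : 1 ≤ r := by nlinarith
  -- a nonzero codeword vanishing on T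
  have hcoT : 1 ≤ finrank F (spn φ T).dualCoannihilator := by
    have := Subspace.finrank_add_finrank_dualCoannihilator_eq (spn φ T)
    rw [hk] at this
    omega
  obtain ⟨z, hz, hz0⟩ : ∃ z : C, z ∈ (spn φ T).dualCoannihilator ∧ z ≠ 0 := by
    by_contra hcon
    push_neg at hcon
    have : (spn φ T).dualCoannihilator = ⊥ := by
      rw [eq_bot_iff]
      intro x hx
      by_cases hx0 : x = 0
      · simp [hx0]
      · exact absurd (hcon x hx) (by simp [hx0])
    rw [this, finrank_bot] at hcoT
    omega
  have hzvan : ∀ j ∈ T, (z : Fin n → F) j = 0 := (hco T z).mp hz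
  have hzC : (z : Fin n → F) ∈ C := z.2
  have hzne : (z : Fin n → F) ≠ 0 := fun h => hz0 (Subtype.ext h)
  have hdz : d ≤ hammingNorm (z : Fin n → F) := hd.1 _ hzC hzne
  -- weight bound: support of z is disjoint from T
  have hwt : hammingNorm (z : Fin n → F) + T.card ≤ n := by
    have hdisj : Disjoint ({i | (z : Fin n → F) i ≠ 0} : Finset (Fin n)) T := by
      rw [Finset.disjoint_left]
      intro a ha haT
      simp only [Finset.mem_filter] at ha
      have ha' : (z : Fin n → F) a ≠ 0 := by simpa using ha
      exact ha' (hzvan a haT)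
    calc hammingNorm (z : Fin n → F) + T.card
        = (({i | (z : Fin n → F) i ≠ 0} : Finset (Fin n)) ∪ T).card := by
          rw [Finset.card_union_of_disjoint hdisj]; rfl
      _ ≤ (Finset.univ : Finset (Fin n)).card := Finset.card_le_univ _
      _ = n := by simp
  -- final arithmetic
  have hceil : ⌈(k : ℚ) / (r : ℚ)⌉ ≤ (m' : ℤ) + 1 := by
    rw [Int.ceil_le]
    rw [div_le_iff₀ (by exact_mod_cast hr1 : (0 : ℚ) < r)]
    push_cast
    exact_mod_cast (by exact_mod_cast hT2 : (k : ℚ) ≤ ((m' + 1) * r : ℕ))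
  have hfin : d + (k - 1 + m') ≤ n := by omega
  have : (d : ℤ) + (k - 1 : ℤ) + m' ≤ n := by
    push_cast
    omega
  omega
end

section
/- Let C ≤ F_q^n be a non-degenerate linear code and let j ∈ {1,…,n}. Let S_j = {1,…,n} \ {j} and C(S_j) = {x ∈ C : x_j = 0}. Then for every 1 ≤ s ≤ n one has W_s(C(S_j)^⊥) = (q−1)·(W_{s−1}(C^⊥) − W_{s−1}^j(C^⊥)) + W_s(C^⊥) + W_{s+1}^j(C^⊥) + (q−2)·W_s^j(C^⊥), where by convention W_0(C^⊥) = 1, W_0^j(C^⊥) = 0, and W_{n+1}^j(C^⊥) = 0. -/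
/-- The dual code of a linear code `C ≤ F_q^n`. -/
def dualCode {F : Type} [Field F] {n : ℕ} (C : Submodule F (Fin n → F)) :
    Submodule F (Fin n → F) where
  carrier := {y | ∀ x ∈ C, ∑ i, x i * y i = 0}
  add_mem' := by
    intro a b ha hb x hx
    simp only [Set.mem_setOf_eq] at *
    simp [Pi.add_apply, mul_add, Finset.sum_add_distrib, ha x hx, hb x hx]
  zero_mem' := by intro x hx; simp
  smul_mem' := by
    intro c a ha x hx
    simp only [Set.mem_setOf_eq] at *
    simp [Pi.smul_apply, smul_eq_mul, mul_left_comm, ← Finset.mul_sum, ha x hx]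

/-- `W C i` is the number of codewords of `C` of Hamming weight `i`.
Note `W C 0 = 1` automatically, encoding the convention `W_0(C) = 1`. -/
noncomputable def W {F : Type} [Field F] [DecidableEq F] {n : ℕ}
    (C : Submodule F (Fin n → F)) (i : ℕ) : ℕ :=
  {x : Fin n → F | x ∈ C ∧ hammingNorm x = i}.ncard

/-- `Wj C i j` is the number of codewords of `C` of Hamming weight `i` whose support
contains `j`. Note `Wj C 0 j = 0` and `Wj C (n+1) j = 0` automatically, encoding the
conventions `W_0^j(C) = 0` and `W_{n+1}^j(C) = 0`. -/
noncomputable def Wj {F : Type} [Field F] [DecidableEq F] {n : ℕ}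
    (C : Submodule F (Fin n → F)) (i : ℕ) (j : Fin n) : ℕ :=
  {x : Fin n → F | x ∈ C ∧ hammingNorm x = i ∧ x j ≠ 0}.ncard

section Aux
open Finset


variable {F : Type} [Field F] [Fintype F] [DecidableEq F] {n : ℕ}

lemma ncard_setOf {α : Type} [Fintype α] (P : α → Prop) [DecidablePred P] :
    {x | P x}.ncard = (Finset.univ.filter P).card := by
  rw [Set.ncard_eq_toFinset_card', Set.toFinset_setOf]

lemma mem_dualCode {C : Submodule F (Fin n → F)} {z : Fin n → F} :
    z ∈ dualCode C ↔ ∀ x ∈ C, ∑ i, x i * z i = 0 := Iff.rfl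

lemma inner_single (x : Fin n → F) (j : Fin n) :
    ∑ i, x i * (Pi.single j 1 : Fin n → F) i = x j := by
  simp [Pi.single_apply]

lemma hn_case_b {y : Fin n → F} {c : F} {j : Fin n} (hc : c ≠ 0) (hyj : y j = 0) :
    hammingNorm (y + c • (Pi.single j 1 : Fin n → F)) = hammingNorm y + 1 := by
  have hsupp : ({i | (y + c • (Pi.single j 1 : Fin n → F)) i ≠ 0} : Finset (Fin n))
      = insert j ({i | y i ≠ 0} : Finset (Fin n)) := by
    ext i
    by_cases h : i = j <;> simp [h, Pi.single_apply, hyj, hc]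
  simp only [hammingNorm, hsupp]
  rw [Finset.card_insert_of_notMem (by simp [hyj])]

lemma hn_case_c {y : Fin n → F} {j : Fin n} (hyj : y j ≠ 0) :
    hammingNorm y = hammingNorm (y + (-(y j)) • (Pi.single j 1 : Fin n → F)) + 1 := by
  have hsupp : ({i | (y + (-(y j)) • (Pi.single j 1 : Fin n → F)) i ≠ 0} : Finset (Fin n))
      = ({i | y i ≠ 0} : Finset (Fin n)).erase j := by
    ext i
    by_cases h : i = j <;> simp [h, Pi.single_apply]
  simp only [hammingNorm, hsupp]
  rw [Finset.card_erase_of_mem (by simp [hyj])]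
  have : 1 ≤ ({i | y i ≠ 0} : Finset (Fin n)).card :=
    Finset.card_pos.mpr ⟨j, by simp [hyj]⟩
  omega

lemma hn_case_d {y : Fin n → F} {c : F} {j : Fin n} (hyj : y j ≠ 0) (h2 : y j + c ≠ 0) :
    hammingNorm (y + c • (Pi.single j 1 : Fin n → F)) = hammingNorm y := by
  have hsupp : ({i | (y + c • (Pi.single j 1 : Fin n → F)) i ≠ 0} : Finset (Fin n))
      = ({i | y i ≠ 0} : Finset (Fin n)) := by
    ext i
    by_cases h : i = j <;> simp [h, Pi.single_apply, hyj, h2]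
  simp only [hammingNorm, hsupp]

lemma single_not_mem_dual {C : Submodule F (Fin n → F)} {j : Fin n}
    {x0 : Fin n → F} (hx0C : x0 ∈ C) (hx0j : x0 j ≠ 0) :
    (Pi.single j 1 : Fin n → F) ∉ dualCode C := by
  intro h
  exact hx0j (by simpa [inner_single] using h x0 hx0C)

lemma inner_add_smul_single (x z : Fin n → F) (c : F) (j : Fin n) :
    ∑ i, x i * (z + c • (Pi.single j 1 : Fin n → F)) i = (∑ i, x i * z i) + c * x j := by
  calc ∑ i, x i * (z + c • (Pi.single j 1 : Fin n → F)) i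
      = ∑ i, (x i * z i + c * (x i * (Pi.single j 1 : Fin n → F) i)) :=
        Finset.sum_congr rfl (fun i _ => by
          simp only [Pi.add_apply, Pi.smul_apply, smul_eq_mul]; ring)
    _ = (∑ i, x i * z i) + c * ∑ i, x i * (Pi.single j 1 : Fin n → F) i := by
        rw [Finset.sum_add_distrib, Finset.mul_sum]
    _ = (∑ i, x i * z i) + c * x j := by rw [inner_single]

lemma dual_inf_mem {C : Submodule F (Fin n → F)} {j : Fin n}
    {x0 : Fin n → F} (hx0C : x0 ∈ C) (hx0j : x0 j ≠ 0) (z : Fin n → F) :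
    z ∈ dualCode (C ⊓ LinearMap.ker (LinearMap.proj j : (Fin n → F) →ₗ[F] F)) ↔
      ∃ y ∈ dualCode C, ∃ c : F, z = y + c • (Pi.single j 1 : Fin n → F) := by
  constructor
  · intro hz
    set c : F := (∑ i, x0 i * z i) / x0 j with hc
    have hzeq : z = (z + (-c) • (Pi.single j 1 : Fin n → F)) + c • (Pi.single j 1 : Fin n → F) := by
      funext i; simp only [Pi.add_apply, Pi.smul_apply, smul_eq_mul]; ring
    refine ⟨z + (-c) • (Pi.single j 1 : Fin n → F), ?_, c, hzeq⟩
    intro x hx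
    have hmem : x - (x j / x0 j) • x0 ∈ C ⊓ LinearMap.ker (LinearMap.proj j : (Fin n → F) →ₗ[F] F) := by
      rw [Submodule.mem_inf]
      refine ⟨sub_mem hx (Submodule.smul_mem _ _ hx0C), ?_⟩
      rw [LinearMap.mem_ker]
      show x j - (x j / x0 j) * x0 j = 0
      rw [div_mul_cancel₀ _ hx0j, sub_self]
    have h0 := hz _ hmem
    have hA : ∑ i, (x - (x j / x0 j) • x0) i * z i
        = (∑ i, x i * z i) - (x j / x0 j) * ∑ i, x0 i * z i := by
      rw [Finset.mul_sum, ← Finset.sum_sub_distrib]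
      exact Finset.sum_congr rfl fun i _ => by
        simp only [Pi.sub_apply, Pi.smul_apply, smul_eq_mul]; ring
    rw [hA] at h0
    rw [inner_add_smul_single]
    have hxz : ∑ i, x i * z i = x j / x0 j * ∑ i, x0 i * z i := sub_eq_zero.mp h0
    rw [hxz, hc]
    ring
  · rintro ⟨y, hy, c, rfl⟩
    intro x hxm
    rw [Submodule.mem_inf] at hxm
    obtain ⟨hxC, hxj⟩ := hxm
    rw [LinearMap.mem_ker] at hxj
    have hxj' : x j = 0 := hxj
    rw [inner_add_smul_single, hy x hxC, hxj']
    ring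

lemma dual_unique {C : Submodule F (Fin n → F)} {j : Fin n}
    {x0 : Fin n → F} (hx0C : x0 ∈ C) (hx0j : x0 j ≠ 0)
    {y y' : Fin n → F} (hy : y ∈ dualCode C) (hy' : y' ∈ dualCode C) {c c' : F}
    (h : y + c • (Pi.single j 1 : Fin n → F) = y' + c' • (Pi.single j 1 : Fin n → F)) :
    y = y' ∧ c = c' := by
  have hcc : c = c' := by
    by_contra hne
    apply single_not_mem_dual hx0C hx0j
    have h2 : y' - y = (c - c') • (Pi.single j 1 : Fin n → F) := by
      funext i
      have := congrFun h i
      simp only [Pi.add_apply, Pi.smul_apply, smul_eq_mul, Pi.sub_apply] at this ⊢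
      linear_combination -this
    have h3 : (Pi.single j 1 : Fin n → F) = (c - c')⁻¹ • (y' - y) := by
      rw [h2, smul_smul, inv_mul_cancel₀ (sub_ne_zero.mpr hne), one_smul]
    rw [h3]
    exact Submodule.smul_mem _ _ (sub_mem hy' hy)
  subst hcc
  exact ⟨add_right_cancel h, rfl⟩

end Aux


set_option maxHeartbeats 2000000

/-- For a non-degenerate linear code `C ≤ F_q^n`, a coordinate `j`, and `1 ≤ s ≤ n`:
`W_s(C(S_j)^⊥) = (q−1)(W_{s−1}(C^⊥) − W_{s−1}^j(C^⊥)) + W_s(C^⊥) + W_{s+1}^j(C^⊥)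
+ (q−2) W_s^j(C^⊥)`, where `C(S_j) = {x ∈ C : x j = 0}`. -/
theorem stmt_7 {F : Type} [Field F] [Fintype F] [DecidableEq F] {n : ℕ}
    (C : Submodule F (Fin n → F)) (hC : C ≠ ⊥)
    (hnd : ∀ j : Fin n, ∃ x ∈ C, x j ≠ 0) (j : Fin n)
    (s : ℕ) (hs1 : 1 ≤ s) (hsn : s ≤ n) :
    (W (dualCode (C ⊓ LinearMap.ker (LinearMap.proj j : (Fin n → F) →ₗ[F] F))) s : ℤ)
      = ((Fintype.card F : ℤ) - 1) * ((W (dualCode C) (s - 1) : ℤ) - (Wj (dualCode C) (s - 1) j : ℤ))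
        + (W (dualCode C) s : ℤ) + (Wj (dualCode C) (s + 1) j : ℤ)
        + ((Fintype.card F : ℤ) - 2) * (Wj (dualCode C) s j : ℤ) := by
  classical
  obtain ⟨x0, hx0C, hx0j⟩ := hnd j
  set q := Fintype.card F with hqdef
  set D := C ⊓ LinearMap.ker (LinearMap.proj j : (Fin n → F) →ₗ[F] F) with hDdef
  -- finsets
  set A : Finset (Fin n → F) :=
    Finset.univ.filter (fun z => z ∈ dualCode D ∧ hammingNorm z = s) with hAdef
  set B : Finset ((Fin n → F) × F) :=
    Finset.univ.filter (fun p => p.1 ∈ dualCode C ∧ hammingNorm (p.1 + p.2 • (Pi.single j 1 : Fin n → F)) = s) with hBdef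
  set Ws : ℕ → Finset (Fin n → F) :=
    (fun i => Finset.univ.filter (fun y => y ∈ dualCode C ∧ hammingNorm y = i)) with hWsdef
  set Wjs : ℕ → Finset (Fin n → F) :=
    (fun i => Finset.univ.filter
      (fun y => y ∈ dualCode C ∧ hammingNorm y = i ∧ y j ≠ 0)) with hWjsdef
  set Y1 : Finset (Fin n → F) :=
    Finset.univ.filter
      (fun y => y ∈ dualCode C ∧ hammingNorm y = s - 1 ∧ y j = 0) with hY1def
  -- counting identifications
  have hWD : W (dualCode D) s = A.card := ncard_setOf _
  have hWs : ∀ i, W (dualCode C) i = (Ws i).card := fun i => ncard_setOf _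
  have hWjs : ∀ i, Wj (dualCode C) i j = (Wjs i).card := fun i => ncard_setOf _
  -- bijection between A and B
  have hAB : B.card = A.card := by
    apply Finset.card_bij (fun p _ => p.1 + p.2 • (Pi.single j 1 : Fin n → F))
    · rintro ⟨y, c⟩ hp
      simp only [hBdef, Finset.mem_filter] at hp
      simp only [hAdef, Finset.mem_filter]
      exact ⟨Finset.mem_univ _,
        (dual_inf_mem hx0C hx0j _).mpr ⟨y, hp.2.1, c, rfl⟩, hp.2.2⟩
    · rintro ⟨y, c⟩ hp ⟨y', c'⟩ hp' heq
      simp only [hBdef, Finset.mem_filter] at hp hp'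
      obtain ⟨h1, h2⟩ := dual_unique hx0C hx0j hp.2.1 hp'.2.1 heq
      exact Prod.ext h1 h2
    · intro z hz
      simp only [hAdef, Finset.mem_filter] at hz
      obtain ⟨y, hy, c, rfl⟩ := (dual_inf_mem hx0C hx0j z).mp hz.2.1
      refine ⟨(y, c), ?_, rfl⟩
      simp only [hBdef, Finset.mem_filter]
      exact ⟨Finset.mem_univ _, hy, hz.2.2⟩
  -- partition of B
  have t1 := Finset.card_filter_add_card_filter_not (s := B)
    (p := fun p => p.2 = 0)
  have t2 := Finset.card_filter_add_card_filter_not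
    (s := B.filter (fun p => ¬ p.2 = 0)) (p := fun p => p.1 j = 0)
  have t3 := Finset.card_filter_add_card_filter_not
    (s := (B.filter (fun p => ¬ p.2 = 0)).filter (fun p => ¬ p.1 j = 0))
    (p := fun p => p.1 j + p.2 = 0)
  -- part 0 : c = 0
  have hc0 : (B.filter (fun p => p.2 = 0)).card = (Ws s).card := by
    apply Finset.card_bij (fun p _ => p.1)
    · rintro ⟨y, c⟩ hp
      simp only [hBdef, Finset.mem_filter] at hp
      obtain ⟨⟨-, hyC, hnorm⟩, hc⟩ := hp
      simp only [hc, zero_smul, add_zero] at hnorm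
      simp only [hWsdef, Finset.mem_filter]
      exact ⟨Finset.mem_univ _, hyC, hnorm⟩
    · rintro ⟨y, c⟩ hp ⟨y', c'⟩ hp' heq
      simp only [hBdef, Finset.mem_filter] at hp hp'
      exact Prod.ext heq (hp.2.trans hp'.2.symm)
    · intro y hy
      simp only [hWsdef, Finset.mem_filter] at hy
      refine ⟨(y, 0), ?_, rfl⟩
      simp only [hBdef, Finset.mem_filter]
      refine ⟨⟨Finset.mem_univ _, hy.2.1, ?_⟩, ?_⟩
      · simp [hy.2.2]
      · trivial
  -- part 1 : c ≠ 0, y j = 0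
  have hc1 : ((B.filter (fun p => ¬ p.2 = 0)).filter (fun p => p.1 j = 0)).card
      = Y1.card * (q - 1) := by
    have heq : (B.filter (fun p => ¬ p.2 = 0)).filter (fun p => p.1 j = 0)
        = Y1 ×ˢ (Finset.univ.filter (fun c : F => c ≠ 0)) := by
      ext ⟨y, c⟩
      simp only [hBdef, hY1def, Finset.mem_filter, Finset.mem_product, Finset.mem_univ,
        true_and]
      constructor
      · rintro ⟨⟨⟨hyC, hnorm⟩, hc⟩, hyj⟩
        rw [hn_case_b hc hyj] at hnorm
        exact ⟨⟨hyC, by omega, hyj⟩, hc⟩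
      · rintro ⟨⟨hyC, hnorm, hyj⟩, hc⟩
        refine ⟨⟨⟨hyC, ?_⟩, hc⟩, hyj⟩
        rw [hn_case_b hc hyj, hnorm]
        omega
    rw [heq, Finset.card_product]
    congr 1
    rw [Finset.filter_ne', Finset.card_erase_of_mem (Finset.mem_univ _),
      Finset.card_univ]
  -- part 2 : c ≠ 0, y j ≠ 0, y j + c = 0
  have hc2 : (((B.filter (fun p => ¬ p.2 = 0)).filter (fun p => ¬ p.1 j = 0)).filter
      (fun p => p.1 j + p.2 = 0)).card = (Wjs (s + 1)).card := by
    apply Finset.card_bij (fun p _ => p.1)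
    · rintro ⟨y, c⟩ hp
      simp only [hBdef, Finset.mem_filter] at hp
      obtain ⟨⟨⟨⟨-, hyC, hnorm⟩, hc⟩, hyj⟩, hsum⟩ := hp
      have hcval : c = -(y j) := by linear_combination hsum
      subst hcval
      have hny : hammingNorm y = s + 1 := by rw [hn_case_c hyj, hnorm]
      simp only [hWjsdef, Finset.mem_filter]
      exact ⟨Finset.mem_univ _, hyC, hny, hyj⟩
    · rintro ⟨y, c⟩ hp ⟨y', c'⟩ hp' heq
      simp only [hBdef, Finset.mem_filter] at hp hp'
      have heq' : y = y' := heq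
      refine Prod.ext heq ?_
      show c = c'
      have h1 : y j + c = 0 := hp.2
      have h2 : y' j + c' = 0 := hp'.2
      rw [heq'] at h1
      linear_combination h1 - h2
    · intro y hy
      simp only [hWjsdef, Finset.mem_filter] at hy
      obtain ⟨-, hyC, hnorm, hyj⟩ := hy
      refine ⟨(y, -(y j)), ?_, rfl⟩
      simp only [hBdef, Finset.mem_filter]
      refine ⟨⟨⟨⟨Finset.mem_univ _, hyC, ?_⟩, by simpa using hyj⟩, hyj⟩, by ring⟩
      have := hn_case_c (y := y) (j := j) hyj
      omega
  -- part 3 : c ≠ 0, y j ≠ 0, y j + c ≠ 0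
  have hone : (1 : F) ≠ 0 := one_ne_zero
  have hc3 : (((B.filter (fun p => ¬ p.2 = 0)).filter (fun p => ¬ p.1 j = 0)).filter
      (fun p => ¬ (p.1 j + p.2 = 0))).card = (Wjs s).card * (q - 1 - 1) := by
    have hcard : (Finset.univ.filter (fun d : F => d ≠ 0 ∧ d ≠ 1)).card = q - 1 - 1 := by
      have heq : (Finset.univ.filter (fun d : F => d ≠ 0 ∧ d ≠ 1))
          = (Finset.univ.erase (0 : F)).erase 1 := by
        ext d
        simp only [Finset.mem_filter, Finset.mem_erase, Finset.mem_univ, true_and, and_true]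
        tauto
      rw [heq, Finset.card_erase_of_mem (Finset.mem_erase.mpr ⟨hone, Finset.mem_univ _⟩),
        Finset.card_erase_of_mem (Finset.mem_univ _), Finset.card_univ]
    rw [← hcard, ← Finset.card_product]
    apply (Finset.card_bij (fun (p : (Fin n → F) × F) _ => (p.1, -(p.2 * p.1 j))) ?_ ?_ ?_).symm
    · rintro ⟨y, d⟩ hp
      simp only [hWjsdef, Finset.mem_product, Finset.mem_filter, Finset.mem_univ,
        true_and] at hp
      obtain ⟨⟨hyC, hnorm, hyj⟩, hd0, hd1⟩ := hp
      have hc0' : -(d * y j) ≠ 0 := by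
        simp only [neg_ne_zero]
        exact mul_ne_zero hd0 hyj
      have hsum : y j + -(d * y j) ≠ 0 := by
        intro h
        apply hd1
        have : (1 - d) * y j = 0 := by linear_combination h
        rcases mul_eq_zero.mp this with h' | h'
        · linear_combination -h'
        · exact absurd h' hyj
      simp only [hBdef, Finset.mem_filter]
      refine ⟨⟨⟨⟨Finset.mem_univ _, hyC, ?_⟩, hc0'⟩, hyj⟩, hsum⟩
      rw [hn_case_d hyj hsum, hnorm]
    · rintro ⟨y, d⟩ hp ⟨y', d'⟩ hp' heq
      simp only [hWjsdef, Finset.mem_product, Finset.mem_filter, Finset.mem_univ,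
        true_and] at hp hp'
      have h1 : y = y' := congrArg Prod.fst heq
      refine Prod.ext h1 ?_
      have h2 : -(d * y j) = -(d' * y' j) := congrArg Prod.snd heq
      rw [← h1] at h2
      have hyj : y j ≠ 0 := hp.1.2.2
      field_simp at h2
      exact neg_inj.mp h2
    · rintro ⟨y, c⟩ hp
      simp only [hBdef, Finset.mem_filter] at hp
      obtain ⟨⟨⟨⟨-, hyC, hnorm⟩, hc⟩, hyj⟩, hsum⟩ := hp
      rw [hn_case_d hyj hsum] at hnorm
      refine ⟨(y, -(c / y j)), ?_, ?_⟩
      · simp only [hWjsdef, Finset.mem_product, Finset.mem_filter, Finset.mem_univ,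
          true_and]
        refine ⟨⟨hyC, hnorm, hyj⟩, ?_, ?_⟩
        · simp only [neg_ne_zero]
          exact div_ne_zero hc hyj
        · intro h
          apply hsum
          rw [← neg_div, div_eq_iff hyj] at h
          linear_combination -h
      · show (y, -(-(c / y j) * y j)) = (y, c)
        have hv : -(-(c / y j) * y j) = c := by field_simp
        rw [hv]
  -- assemble the ℕ identity
  have hsplitW : (Ws (s - 1)).card = (Wjs (s - 1)).card + Y1.card := by
    have t4 := Finset.card_filter_add_card_filter_not (s := Ws (s - 1))
      (p := fun y => y j ≠ 0)
    have e1 : (Ws (s - 1)).filter (fun y => y j ≠ 0) = Wjs (s - 1) := by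
      ext y
      simp only [hWsdef, hWjsdef, Finset.mem_filter, Finset.mem_univ, true_and]
      tauto
    have e2 : (Ws (s - 1)).filter (fun y => ¬ y j ≠ 0) = Y1 := by
      ext y
      simp only [hWsdef, hY1def, Finset.mem_filter, Finset.mem_univ, true_and, not_not]
      tauto
    rw [e1, e2] at t4
    omega
  have hq2 : 2 ≤ q := Fintype.one_lt_card
  have hBcard : B.card = (Ws s).card + Y1.card * (q - 1) + (Wjs (s + 1)).card
      + (Wjs s).card * (q - 1 - 1) := by omega
  -- final arithmetic over ℤ
  rw [hWD, hWs, hWs, hWjs, hWjs, hWjs, ← hAB, hBcard]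
  have h1 : ((q - 1 : ℕ) : ℤ) = (q : ℤ) - 1 := by
    have : 1 ≤ q := by omega
    push_cast [Nat.cast_sub this]
    ring
  have h2 : ((q - 1 - 1 : ℕ) : ℤ) = (q : ℤ) - 2 := by
    have : (q - 1 - 1 : ℕ) = q - 2 := by omega
    rw [this]
    have h2q : 2 ≤ q := hq2
    push_cast [Nat.cast_sub h2q]
    ring
  push_cast [h1, h2, hsplitW]
  ring
end

section
/- Let C ≤ F_q^n be a linear code of dimension k ≥ 2 and minimum distance d, and let i ∈ {1,…,n}. If there exists x ∈ C with i ∈ σ(x), then there exists y ∈ C with i ∈ σ(y) and wH(y) ≤ n − k + 1 − (d − q)/q (the inequality is between real numbers). -/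
open Finset
set_option linter.unusedSectionVars false
set_option synthInstance.maxHeartbeats 1000000
set_option maxHeartbeats 1000000

section aux
variable {F : Type} [Field F] [Fintype F] [DecidableEq F] {n : ℕ}

lemma hN_le_of_support_subset {x : Fin n → F} {W : Finset (Fin n)}
    (h : ∀ j, x j ≠ 0 → j ∈ W) : hammingNorm x ≤ W.card := by
  refine Finset.card_le_card ?_
  intro j hj
  simp only [Finset.mem_filter, Finset.mem_univ, true_and] at hj
  exact h j hj

lemma pigeon (c v : Fin n → F) :
    ∃ α : F, (Finset.univ.filter fun j => c j ≠ 0).card ≤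
      Fintype.card F * ((Finset.univ.filter fun j => c j ≠ 0).filter fun j => v j = α * c j).card := by
  classical
  set S : Finset (Fin n) := Finset.univ.filter fun j => c j ≠ 0 with hS
  have hpart : S.card = ∑ α : F, (S.filter fun j => v j * (c j)⁻¹ = α).card :=
    Finset.card_eq_sum_card_fiberwise (fun j _ => Finset.mem_univ _)
  obtain ⟨α, -, hmax⟩ := Finset.exists_max_image (Finset.univ : Finset F)
    (fun α => (S.filter fun j => v j * (c j)⁻¹ = α).card) ⟨0, Finset.mem_univ 0⟩
  refine ⟨α, ?_⟩
  have h1 : S.card ≤ Fintype.card F * (S.filter fun j => v j * (c j)⁻¹ = α).card := by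
    rw [hpart]
    calc ∑ β : F, (S.filter fun j => v j * (c j)⁻¹ = β).card
        ≤ Fintype.card F • (S.filter fun j => v j * (c j)⁻¹ = α).card :=
          Finset.sum_le_card_nsmul _ _ _ (fun β _ => hmax β (Finset.mem_univ β))
      _ = _ := by simp [smul_eq_mul]
  have h2 : (S.filter fun j => v j * (c j)⁻¹ = α) = (S.filter fun j => v j = α * c j) := by
    apply Finset.filter_congr
    intro j hj
    have hcj : c j ≠ 0 := by simpa [hS] using hj
    constructor
    · intro h; field_simp at h; simp [h, mul_comm]
    · intro h; simp [h]; field_simp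
  rw [h2] at h1
  exact h1

lemma count_step (c v z : Fin n → F) (α : F)
    (hz1 : ∀ j, c j = 0 → z j = v j) (hz2 : ∀ j, c j ≠ 0 → z j = 0) :
    hammingNorm (v - α • c) +
        ((Finset.univ.filter fun j => c j ≠ 0).filter fun j => v j = α * c j).card
      ≤ hammingNorm z + (Finset.univ.filter fun j => c j ≠ 0).card := by
  classical
  set S : Finset (Fin n) := Finset.univ.filter fun j => c j ≠ 0 with hS
  set A : Finset (Fin n) := S.filter fun j => v j = α * c j with hA
  set Z : Finset (Fin n) := Finset.univ.filter fun j => z j ≠ 0 with hZ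
  have hAS : A ⊆ S := Finset.filter_subset _ _
  have hsub : hammingNorm (v - α • c) ≤ (Z ∪ (S \ A)).card := by
    apply hN_le_of_support_subset
    intro l hl
    rw [Finset.mem_union]
    by_cases hcl : c l = 0
    · left
      have : (v - α • c) l = v l := by simp [hcl]
      rw [this] at hl
      simp [hZ, hz1 l hcl, hl]
    · right
      rw [Finset.mem_sdiff]
      refine ⟨by simp [hS, hcl], ?_⟩
      intro hlA
      have : v l = α * c l := by
        have := Finset.mem_filter.mp hlA
        exact this.2
      apply hl
      simp [this]
    
  have hcup : (Z ∪ (S \ A)).card ≤ Z.card + (S \ A).card := Finset.card_union_le _ _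
  have hsd : (S \ A).card = S.card - A.card := Finset.card_sdiff_of_subset hAS
  have hle : A.card ≤ S.card := Finset.card_le_card hAS
  have hZcard : Z.card = hammingNorm z := rfl
  omega

lemma lemL (r : ℕ) : ∀ (V : Submodule F (Fin n → F)) (W : Finset (Fin n)) (i : Fin n),
    Module.finrank F V = r →
    (∀ v ∈ V, ∀ j, v j ≠ 0 → j ∈ W) →
    (∃ x ∈ V, x i ≠ 0) →
    ∃ z ∈ V, z i ≠ 0 ∧ hammingNorm z + r ≤ W.card + 1 := by
  induction r with
  | zero =>
    intro V W i hr _ h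
    obtain ⟨x, hxV, hxi⟩ := h
    exfalso
    have : V = ⊥ := Submodule.finrank_eq_zero.mp hr
    rw [this, Submodule.mem_bot] at hxV
    exact hxi (by simp [hxV])
  | succ r ih =>
    intro V W i hr hsupp h
    obtain ⟨x, hxV, hxi⟩ := h
    by_cases hu : ∃ u ∈ V, u ≠ 0 ∧ u i = 0
    · obtain ⟨u, huV, hu0, hui⟩ := hu
      obtain ⟨j, huj⟩ : ∃ j, u j ≠ 0 := Function.ne_iff.mp hu0
      have hjW : j ∈ W := hsupp u huV j huj
      set f : V →ₗ[F] F := (LinearMap.proj j).comp V.subtype with hf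
      have hfsurj : LinearMap.range f = ⊤ := by
        rw [LinearMap.range_eq_top]
        intro a
        refine ⟨(a * (u j)⁻¹) • ⟨u, huV⟩, ?_⟩
        simp [hf]
        field_simp
      have hker : Module.finrank F (LinearMap.ker f) = r := by
        have := f.finrank_range_add_finrank_ker
        rw [hfsurj, finrank_top, hr] at this
        have h1 : Module.finrank F F = 1 := Module.finrank_self F
        omega
      set V' : Submodule F (Fin n → F) := (LinearMap.ker f).map V.subtype with hV'
      have hV'le : V' ≤ V := by
        rw [hV']
        rintro v ⟨⟨w, hwV⟩, -, rfl⟩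
        exact hwV
      have hmemV' : ∀ v, v ∈ V' ↔ (v ∈ V ∧ v j = 0) := by
        intro v
        constructor
        · rintro ⟨⟨w, hwV⟩, hwker, rfl⟩
          exact ⟨hwV, by simpa [hf] using hwker⟩
        · rintro ⟨hvV, hvj⟩
          exact ⟨⟨v, hvV⟩, by simp [hf, LinearMap.mem_ker, hvj], rfl⟩
      have hrV' : Module.finrank F V' = r := by
        rw [hV', ← hker]
        exact ((LinearMap.ker f).equivMapOfInjective V.subtype V.injective_subtype).symm.finrank_eq
      have hx' : ∃ x' ∈ V', x' i ≠ 0 := by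
        refine ⟨x - (x j * (u j)⁻¹) • u, ?_, ?_⟩
        · rw [hmemV']
          refine ⟨V.sub_mem hxV (V.smul_mem _ huV), ?_⟩
          simp
          field_simp
          simp
        · simpa [hui] using hxi
      have hsupp' : ∀ v ∈ V', ∀ l, v l ≠ 0 → l ∈ W.erase j := by
        intro v hvV' l hvl
        rcases (hmemV' v).mp hvV' with ⟨hvV, hvj⟩
        refine Finset.mem_erase.mpr ⟨?_, hsupp v hvV l hvl⟩
        rintro rfl; exact hvl hvj
      obtain ⟨z, hzV', hzi, hz⟩ := ih V' (W.erase j) i hrV' hsupp' hx'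
      refine ⟨z, hV'le hzV', hzi, ?_⟩
      have hcard : (W.erase j).card + 1 = W.card := Finset.card_erase_add_one hjW
      omega
    · push_neg at hu
      set f : V →ₗ[F] F := (LinearMap.proj i).comp V.subtype with hf
      have hinj : LinearMap.ker f = ⊥ := by
        rw [LinearMap.ker_eq_bot']
        rintro ⟨v, hvV⟩ hv
        have hvi : v i = 0 := by simpa [hf] using hv
        have := hu v hvV
        by_contra hne
        have hvne : v ≠ 0 := by
          intro h; apply hne; ext; simp [h]
        exact (this hvne) hvi
      have : Module.finrank F V ≤ 1 := by
        have := f.finrank_range_add_finrank_ker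
        rw [hinj, finrank_bot] at this
        have h2 : Module.finrank F (LinearMap.range f) ≤ Module.finrank F F :=
          Submodule.finrank_le _
        rw [Module.finrank_self] at h2
        omega
      have hr0 : r = 0 := by omega
      refine ⟨x, hxV, hxi, ?_⟩
      have := hN_le_of_support_subset (hsupp x hxV)
      omega

/-- Projection killing the support of `c`. -/
def maskMap (c : Fin n → F) : (Fin n → F) →ₗ[F] (Fin n → F) where
  toFun x := fun j => if c j = 0 then x j else 0
  map_add' x y := by funext j; by_cases h : c j = 0 <;> simp [h]
  map_smul' a x := by funext j; by_cases h : c j = 0 <;> simp [h]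

lemma final_arith (q k d n w t : ℕ) (hq : 1 ≤ q) (h1 : d ≤ q * t) (h2 : w + t + k ≤ n + 2) :
    (w : ℝ) ≤ (n : ℝ) - (k : ℝ) + 1 - ((d : ℝ) - (q : ℝ)) / (q : ℝ) := by
  have hq0 : (0:ℝ) < q := by exact_mod_cast hq
  have h2' : (w:ℝ) + t + k ≤ n + 2 := by exact_mod_cast h2
  have h1' : (d:ℝ) ≤ (q:ℝ) * t := by exact_mod_cast h1
  have hstep : (q:ℝ) * ((t:ℝ) - 1) ≤ (q:ℝ) * ((n:ℝ) - k + 1 - w) :=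
    mul_le_mul_of_nonneg_left (by linarith) (le_of_lt hq0)
  have key : (d:ℝ) - q ≤ ((n:ℝ) - k + 1 - w) * q := by nlinarith
  have := (div_le_iff₀ hq0).mpr key
  linarith

end aux

/-- If `C ≤ F_q^n` has dimension `k ≥ 2` and minimum distance `d`, and some codeword is
nonzero at coordinate `i`, then there is a codeword `y ∈ C` nonzero at `i` with
`wH(y) ≤ n − k + 1 − (d − q)/q`. -/
theorem stmt_9 {F : Type} [Field F] [Fintype F] [DecidableEq F] {n : ℕ}
    (C : Submodule F (Fin n → F)) (hC : C ≠ ⊥)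
    (k d : ℕ) (hk : Module.finrank F C = k) (hk2 : 2 ≤ k)
    (hd : IsMinDist C d) (i : Fin n)
    (hx : ∃ x ∈ C, x i ≠ 0) :
    ∃ y ∈ C, y i ≠ 0 ∧
      (hammingNorm y : ℝ) ≤ (n : ℝ) - (k : ℝ) + 1 -
        ((d : ℝ) - (Fintype.card F : ℝ)) / (Fintype.card F : ℝ) := by
  classical
  obtain ⟨hmin, c, hcC, hc0, hcd⟩ := hd
  set q := Fintype.card F with hqdef
  have hq : 1 ≤ q := Fintype.card_pos
  set S : Finset (Fin n) := Finset.univ.filter (fun j => c j ≠ 0) with hSdef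
  have hScard : S.card = d := hcd
  set P : (Fin n → F) →ₗ[F] (Fin n → F) := maskMap c with hPdef
  have hPapp : ∀ (x : Fin n → F) j, P x j = if c j = 0 then x j else 0 := fun x j => rfl
  have hPc : P c = 0 := by
    funext j
    by_cases h : c j = 0
    · rw [hPapp, if_pos h]; exact h
    · rw [hPapp, if_neg h]; rfl
  set D' : Submodule F (Fin n → F) := C.map P with hD'def
  set f : C →ₗ[F] (Fin n → F) := P.comp C.subtype with hfdef
  have hmul : ∀ w ∈ C, (∀ j, c j = 0 → w j = 0) → ∃ a : F, w = a • c := by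
    intro w hwC hwS
    by_cases hw0 : w = 0
    · exact ⟨0, by simp [hw0]⟩
    · obtain ⟨j, hwj⟩ : ∃ j, w j ≠ 0 := Function.ne_iff.mp hw0
      have hcj : c j ≠ 0 := fun h => hwj (hwS j h)
      have hjS : j ∈ S := by simp [hSdef, hcj]
      refine ⟨w j * (c j)⁻¹, ?_⟩
      by_contra hne
      have hw' : w - (w j * (c j)⁻¹) • c ≠ 0 := sub_ne_zero.mpr hne
      have hw'C : w - (w j * (c j)⁻¹) • c ∈ C := C.sub_mem hwC (C.smul_mem _ hcC)
      have hdle : d ≤ hammingNorm (w - (w j * (c j)⁻¹) • c) := hmin _ hw'C hw'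
      have hsub : hammingNorm (w - (w j * (c j)⁻¹) • c) ≤ (S.erase j).card := by
        apply hN_le_of_support_subset
        intro l hl
        refine Finset.mem_erase.mpr ⟨?_, ?_⟩
        · rintro rfl
          apply hl
          simp only [Pi.sub_apply, Pi.smul_apply, smul_eq_mul]
          field_simp
          simp
        · by_contra hlS
          have hcl : c l = 0 := by
            by_contra hcl'; exact hlS (by simp [hSdef, hcl'])
          apply hl
          simp [hwS l hcl, hcl]
      have hje : (S.erase j).card + 1 = S.card := Finset.card_erase_add_one hjS
      omega
  have hker : LinearMap.ker f = Submodule.span F {(⟨c, hcC⟩ : C)} := by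
    ext w
    obtain ⟨w, hwC⟩ := w
    rw [LinearMap.mem_ker, Submodule.mem_span_singleton]
    constructor
    · intro hfw
      have hfw' : P w = 0 := hfw
      have hwS : ∀ j, c j = 0 → w j = 0 := by
        intro j hcj
        have hPwj : P w j = 0 := by rw [hfw']; rfl
        rwa [hPapp, if_pos hcj] at hPwj
      obtain ⟨a, ha⟩ := hmul w hwC hwS
      exact ⟨a, by ext; simp [ha]⟩
    · rintro ⟨a, ha⟩
      have hw : w = a • c := by
        have := congrArg (Subtype.val) ha
        simpa using this.symm
      show P w = 0
      rw [hw, map_smul, hPc, smul_zero]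
  have hc_ne : (⟨c, hcC⟩ : C) ≠ 0 := by
    intro h
    exact hc0 (by simpa using congrArg Subtype.val h)
  have hkerrank : Module.finrank F (LinearMap.ker f) = 1 := by
    rw [hker]; exact finrank_span_singleton hc_ne
  have hrange : LinearMap.range f = D' := by
    rw [hfdef, LinearMap.range_comp, Submodule.range_subtype]
  set r : ℕ := Module.finrank F D' with hrdef
  have hkr : k = r + 1 := by
    have := f.finrank_range_add_finrank_ker
    rw [hrange, hkerrank, hk] at this
    omega
  have hD'supp : ∀ z ∈ D', ∀ j, z j ≠ 0 → j ∈ Sᶜ := by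
    rintro z hz j hzj
    obtain ⟨v, hvC, rfl⟩ := Submodule.mem_map.mp hz
    have hcj : c j = 0 := by
      by_contra hcj'
      exact hzj (by rw [hPapp, if_neg hcj'])
    simp [hSdef, hcj]
  have hcards : S.card + Sᶜ.card = n := by
    rw [Finset.card_add_card_compl]; simp
  by_cases hci : c i = 0
  · -- i outside the support of c
    obtain ⟨x, hxC, hxi⟩ := hx
    have hPx : P x ∈ D' := Submodule.mem_map_of_mem hxC
    have hPxi : P x i = x i := by rw [hPapp, if_pos hci]
    obtain ⟨z, hzD', hzi, hzlem⟩ :=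
      lemL r D' Sᶜ i hrdef.symm hD'supp ⟨P x, hPx, by rw [hPxi]; exact hxi⟩
    obtain ⟨v, hvC, rfl⟩ := Submodule.mem_map.mp hzD'
    obtain ⟨α, hα⟩ := pigeon c v
    set A : Finset (Fin n) := S.filter fun j => v j = α * c j with hAdef
    set y : Fin n → F := v - α • c with hydef
    have hyC : y ∈ C := C.sub_mem hvC (C.smul_mem _ hcC)
    have hvi : v i = P v i := by rw [hPapp, if_pos hci]
    have hyi : y i ≠ 0 := by
      have : y i = v i := by simp [hydef, hci]
      rw [this, hvi]
      exact hzi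
    have hcount := count_step c v (P v) α
      (fun j hcj => by rw [hPapp, if_pos hcj]) (fun j hcj => by rw [hPapp, if_neg hcj])
    have e1 : hammingNorm y + A.card ≤ hammingNorm (P v) + S.card := hcount
    refine ⟨y, hyC, hyi, ?_⟩
    refine final_arith q k d n (hammingNorm y) A.card hq (hScard ▸ hα) ?_
    omega
  · -- i in the support of c: c itself works
    have hr1 : 1 ≤ r := by omega
    have hD'ne : D' ≠ ⊥ := by
      intro h
      rw [hrdef, h, finrank_bot] at hr1
      omega
    obtain ⟨z0, hz0D', hz00⟩ := Submodule.exists_mem_ne_zero_of_ne_bot hD'ne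
    obtain ⟨i', hz0i'⟩ : ∃ i', z0 i' ≠ 0 := Function.ne_iff.mp hz00
    obtain ⟨z, hzD', hzi', hzlem⟩ :=
      lemL r D' Sᶜ i' hrdef.symm hD'supp ⟨z0, hz0D', hz0i'⟩
    obtain ⟨v, hvC, rfl⟩ := Submodule.mem_map.mp hzD'
    obtain ⟨α, hα⟩ := pigeon c v
    set A : Finset (Fin n) := S.filter fun j => v j = α * c j with hAdef
    set y' : Fin n → F := v - α • c with hy'def
    have hy'C : y' ∈ C := C.sub_mem hvC (C.smul_mem _ hcC)
    have hy'0 : y' ≠ 0 := by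
      intro h
      have : P y' = 0 := by rw [h, map_zero]
      rw [hy'def, map_sub, map_smul, hPc, smul_zero, sub_zero] at this
      exact hzi' (by rw [this]; rfl)
    have hdle : d ≤ hammingNorm y' := hmin _ hy'C hy'0
    have hcount := count_step c v (P v) α
      (fun j hcj => by rw [hPapp, if_pos hcj]) (fun j hcj => by rw [hPapp, if_neg hcj])
    have e1 : hammingNorm y' + A.card ≤ hammingNorm (P v) + S.card := hcount
    refine ⟨c, hcC, hci, ?_⟩
    rw [hcd]
    refine final_arith q k d n d A.card hq (hScard ▸ hα) ?_
    omega
end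

section
/- Let C ≤ F_q^n be a linear code of dimension k with 2 ≤ k ≤ n − 2, minimum distance d, and locality r, and let d^⊥ = d(C^⊥) be the minimum distance of the dual code. Then d^⊥ + (d^⊥ − q)/q ≤ n − d + 3 − ⌈k/r⌉ (the inequality is between real numbers). -/
set_option synthInstance.maxHeartbeats 1000000
set_option maxHeartbeats 1000000
open Module Finset


variable {F : Type} [Field F] {n : ℕ}

/-- the submodule of functions vanishing on T -/
def vanishOn (F : Type) [Field F] {n : ℕ} (T : Finset (Fin n)) : Submodule F (Fin n → F) where
  carrier := {x | ∀ j ∈ T, x j = 0}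
  add_mem' := by intro a b ha hb j hj; simp [ha j hj, hb j hj]
  zero_mem' := by intro j hj; simp
  smul_mem' := by intro c a ha j hj; simp [ha j hj]

@[simp] lemma mem_vanishOn {T : Finset (Fin n)} {x : Fin n → F} :
    x ∈ vanishOn F T ↔ ∀ j ∈ T, x j = 0 := Iff.rfl

noncomputable def Dk (C : Submodule F (Fin n → F)) (T : Finset (Fin n)) : ℕ :=
  finrank F (C ⊓ vanishOn F T : Submodule F (Fin n → F))

lemma Dk_mono (C : Submodule F (Fin n → F)) {T T' : Finset (Fin n)} (h : T ⊆ T') :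
    C ⊓ vanishOn F T' ≤ C ⊓ vanishOn F T := by
  refine inf_le_inf le_rfl ?_
  intro x hx j hj
  exact hx j (h hj)

lemma Dk_insert_le (C : Submodule F (Fin n → F)) (T : Finset (Fin n)) (i : Fin n) :
    Dk C T ≤ Dk C (insert i T) + 1 := by
  classical
  set K := (C ⊓ vanishOn F T : Submodule F (Fin n → F))
  set K' := (C ⊓ vanishOn F (insert i T) : Submodule F (Fin n → F))
  have hK'K : K' ≤ K := Dk_mono C (Finset.subset_insert i T)
  let f : K →ₗ[F] F := (LinearMap.proj i).comp K.subtype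
  have hker : LinearMap.ker f = K'.comap K.subtype := by
    ext ⟨x, hx⟩
    simp only [LinearMap.mem_ker, Submodule.mem_comap, Submodule.coe_subtype]
    constructor
    · intro h
      exact ⟨hx.1, by
        intro j hj
        rcases Finset.mem_insert.mp hj with rfl | hj
        · exact h
        · exact hx.2 j hj⟩
    · intro h
      exact h.2 i (Finset.mem_insert_self i T)
  have h1 : finrank F (LinearMap.range f) + finrank F (LinearMap.ker f) = finrank F K :=
    LinearMap.finrank_range_add_finrank_ker f
  have h2 : finrank F (LinearMap.range f) ≤ 1 := by
    simpa using Submodule.finrank_le (LinearMap.range f)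
  have h3 : finrank F (LinearMap.ker f) = finrank F K' := by
    rw [hker]
    exact (Submodule.comapSubtypeEquivOfLe hK'K).finrank_eq
  have : finrank F K ≤ finrank F K' + 1 := by omega
  simpa [Dk, K, K'] using this

lemma Dk_union_le (C : Submodule F (Fin n → F)) (T A : Finset (Fin n)) :
    Dk C T ≤ Dk C (T ∪ A) + A.card := by
  classical
  induction A using Finset.induction_on generalizing T with
  | empty => simp
  | @insert a A ha ih =>
    have h1 : Dk C T ≤ Dk C (T ∪ A) + A.card := ih T
    have h2 : Dk C (T ∪ A) ≤ Dk C (insert a (T ∪ A)) + 1 := Dk_insert_le C _ a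
    have h3 : T ∪ insert a A = insert a (T ∪ A) := by
      ext x; simp [Finset.mem_insert, Finset.mem_union, or_assoc, or_left_comm]
    rw [Finset.card_insert_of_notMem ha, h3]
    omega

lemma Dk_subset_le (C : Submodule F (Fin n → F)) {T V : Finset (Fin n)} (h : T ⊆ V) :
    Dk C T ≤ Dk C V + (V.card - T.card) := by
  classical
  have h1 := Dk_union_le C T (V \ T)
  rw [Finset.union_sdiff_of_subset h, Finset.card_sdiff_of_subset h] at h1
  exact h1

/-- discrete intermediate value: going from `T` up to `T ∪ A`, the rank drops by ≤ 1 each step -/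
lemma Dk_ivt (C : Submodule F (Fin n → F)) (A : Finset (Fin n)) :
    ∀ T : Finset (Fin n), 1 ≤ Dk C T → Dk C (T ∪ A) ≤ 1 →
    ∃ V : Finset (Fin n), T ⊆ V ∧ Dk C V = 1 := by
  classical
  induction A using Finset.induction_on with
  | empty =>
    intro T h1 h2
    refine ⟨T, Finset.Subset.refl T, ?_⟩
    simpa using le_antisymm (by simpa using h2) h1
  | @insert a A ha ih =>
    intro T h1 h2
    by_cases hc : 1 ≤ Dk C (insert a T)
    · have h3 : insert a T ∪ A = T ∪ insert a A := by
        ext x; simp [Finset.mem_insert, Finset.mem_union, or_assoc, or_left_comm]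
      obtain ⟨V, hTV, hV⟩ := ih (insert a T) hc (by rw [h3]; exact h2)
      exact ⟨V, (Finset.subset_insert a T).trans hTV, hV⟩
    · push_neg at hc
      have h4 : Dk C T ≤ Dk C (insert a T) + 1 := Dk_insert_le C T a
      exact ⟨T, Finset.Subset.refl T, by omega⟩

lemma Dk_locality {C : Submodule F (Fin n → F)} {i : Fin n} {S : Finset (Fin n)}
    (hS : ∀ x ∈ C, ∀ y ∈ C, (∀ j ∈ S, x j = y j) → x i = y i) (T : Finset (Fin n)) :
    Dk C (insert i (T ∪ S)) = Dk C (T ∪ S) := by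
  classical
  have heq : C ⊓ vanishOn F (insert i (T ∪ S)) = C ⊓ vanishOn F (T ∪ S) := by
    refine le_antisymm (Dk_mono C (Finset.subset_insert _ _)) ?_
    rintro x ⟨hxC, hxv⟩
    refine ⟨hxC, ?_⟩
    intro j hj
    rcases Finset.mem_insert.mp hj with rfl | hj
    · have := hS x hxC 0 C.zero_mem (fun j' hj' => by
        simpa using hxv j' (Finset.mem_union_right T hj'))
      simpa using this
    · exact hxv j hj
  unfold Dk
  rw [heq]

lemma Dk_exists_nonzero {C : Submodule F (Fin n → F)} {T : Finset (Fin n)} (h : 1 ≤ Dk C T) :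
    ∃ x ∈ C, x ≠ 0 ∧ ∀ j ∈ T, x j = 0 := by
  have hne : (C ⊓ vanishOn F T : Submodule F (Fin n → F)) ≠ ⊥ := by
    intro hbot
    rw [Dk, hbot, finrank_bot] at h
    omega
  obtain ⟨x, hx, hx0⟩ := Submodule.exists_mem_ne_zero_of_ne_bot hne
  exact ⟨x, hx.1, hx0, hx.2⟩

lemma ghsy_build {C : Submodule F (Fin n → F)} {r : ℕ} (hr : 1 ≤ r)
    (hloc : HasLocality C r) :
    ∀ ρ : ℕ, 2 ≤ ρ → ∀ T : Finset (Fin n), Dk C T = ρ →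
    ∃ V : Finset (Fin n), ∃ s : ℕ, T ⊆ V ∧ Dk C V = 1 ∧
      T.card + (ρ - 1) + s ≤ V.card ∧ ρ ≤ r * s + r := by
  classical
  intro ρ
  induction ρ using Nat.strong_induction_on with
  | _ ρ ih =>
  intro hρ2 T hT
  -- pick a nonzero x in the kernel, and a coordinate i where it doesn't vanish
  obtain ⟨x, hxC, hx0, hxT⟩ := Dk_exists_nonzero (C := C) (T := T) (by omega)
  obtain ⟨i, hxi⟩ : ∃ i, x i ≠ 0 := by
    by_contra h
    push_neg at h
    exact hx0 (funext fun i => h i)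
  have hiT : i ∉ T := fun h => hxi (hxT i h)
  obtain ⟨S, hiS, hScard, hSloc⟩ := hloc i
  set U : Finset (Fin n) := insert i (T ∪ S) with hU
  -- locality: adding i to T ∪ S does not change the kernel
  have hUeq : Dk C U = Dk C (T ∪ S) := Dk_locality hSloc T
  -- the kernel strictly drops when adding i
  have hlt : Dk C (insert i T) < ρ := by
    rw [← hT]
    refine Submodule.finrank_lt_finrank_of_lt ?_
    refine lt_of_le_of_ne (Dk_mono C (Finset.subset_insert i T)) ?_
    intro heq
    have hx' : x ∈ C ⊓ vanishOn F (insert i T) := heq ▸ ⟨hxC, hxT⟩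
    exact hxi (hx'.2 i (Finset.mem_insert_self i T))
  have hUle : Dk C U ≤ ρ - 1 := by
    have h1 : C ⊓ vanishOn F U ≤ C ⊓ vanishOn F (insert i T) :=
      Dk_mono C (by
        intro j hj
        rcases Finset.mem_insert.mp hj with rfl | hj
        · exact Finset.mem_insert_self _ _
        · exact Finset.mem_insert_of_mem (Finset.mem_union_left S hj))
    have := Submodule.finrank_mono h1
    unfold Dk at *
    omega
  -- the kernel drops by at most r (plus the free element i)
  have hUge : ρ ≤ Dk C U + r := by
    have h1 : Dk C T ≤ Dk C (T ∪ S) + S.card := Dk_union_le C T S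
    omega
  -- cardinality: |U| ≥ |T| + (ρ - Dk C U) + 1
  have hiTU : i ∉ T ∪ S := fun h => by
    rcases Finset.mem_union.mp h with h | h
    · exact hiT h
    · exact hiS h
  have hUcard : T.card + (ρ - Dk C U) + 1 ≤ U.card := by
    have h1 : Dk C T ≤ Dk C (T ∪ S) + ((T ∪ S).card - T.card) :=
      Dk_subset_le C Finset.subset_union_left
    have h2 : U.card = (T ∪ S).card + 1 := Finset.card_insert_of_notMem hiTU
    have h3 : T.card ≤ (T ∪ S).card := Finset.card_le_card Finset.subset_union_left
    omega
  rcases Nat.lt_or_ge (Dk C U) 2 with hcase | hcase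
  · rcases Nat.lt_or_ge (Dk C U) 1 with hc0 | hc1
    · -- Dk C U = 0 : partial block
      have hc0' : Dk C U = 0 := by omega
      have h1 : Dk C (T ∪ (U \ T)) ≤ 1 := by
        rw [Finset.union_sdiff_of_subset (by
          intro j hj; exact Finset.mem_insert_of_mem (Finset.mem_union_left S hj))]
        omega
      obtain ⟨V, hTV, hV⟩ := Dk_ivt C (U \ T) T (by omega) h1
      refine ⟨V, 0, hTV, hV, ?_, ?_⟩
      · have := Dk_subset_le C hTV
        have h3 : T.card ≤ V.card := Finset.card_le_card hTV
        omega
      · omega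
    · -- Dk C U = 1 : full block, done
      refine ⟨U, 1, ?_, by omega, by omega, by omega⟩
      intro j hj; exact Finset.mem_insert_of_mem (Finset.mem_union_left S hj)
  · -- Dk C U ≥ 2 : recurse
    obtain ⟨V, s', hUV, hV, hVcard, hVs⟩ := ih (Dk C U) (by omega) hcase U rfl
    refine ⟨V, s' + 1, ?_, hV, ?_, ?_⟩
    · exact fun j hj => hUV (Finset.mem_insert_of_mem (Finset.mem_union_left S hj))
    · omega
    · have : r * (s' + 1) = r * s' + r := by ring
      omega

lemma locality_r_pos {C : Submodule F (Fin n → F)} {r : ℕ} (hC : C ≠ ⊥)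
    (hloc : HasLocality C r) : 1 ≤ r := by
  by_contra h
  push_neg at h
  interval_cases r
  apply hC
  rw [Submodule.eq_bot_iff]
  intro x hx
  funext i
  obtain ⟨S, hiS, hScard, hSloc⟩ := hloc i
  have hS : S = ∅ := Finset.card_eq_zero.mp (by omega)
  have := hSloc x hx 0 C.zero_mem (by simp [hS])
  simpa using this

lemma partB [DecidableEq F] {C : Submodule F (Fin n → F)} {r k d : ℕ} (hC : C ≠ ⊥)
    (hloc : HasLocality C r) (hk : finrank F C = k) (hk2 : 2 ≤ k)
    (hd : IsMinDist C d) :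
    ∃ s : ℕ, d + k + s ≤ n + 1 ∧ k ≤ r * s + r := by
  classical
  have hr : 1 ≤ r := locality_r_pos hC hloc
  have hDk0 : Dk C ∅ = k := by
    have : vanishOn F (∅ : Finset (Fin n)) = ⊤ := by
      rw [Submodule.eq_top_iff']; intro x; simp
    rw [Dk, this, inf_top_eq, hk]
  obtain ⟨V, s, _, hV, hVcard, hVs⟩ := ghsy_build hr hloc k hk2 ∅ hDk0
  obtain ⟨x, hxC, hx0, hxV⟩ := Dk_exists_nonzero (C := C) (T := V) (by omega)
  have hwd : d ≤ hammingNorm x := hd.1 x hxC hx0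
  have hsupp : hammingNorm x ≤ n - V.card := by
    have hsub : ({i | x i ≠ 0} : Finset (Fin n)) ⊆ Finset.univ \ V := by
      intro i hi
      simp only [Finset.mem_filter, Finset.mem_sdiff, Finset.mem_univ, true_and] at *
      intro hiV
      exact hi (hxV i hiV)
    calc hammingNorm x = ({i | x i ≠ 0} : Finset (Fin n)).card := rfl
      _ ≤ (Finset.univ \ V).card := Finset.card_le_card hsub
      _ = n - V.card := by rw [Finset.card_sdiff_of_subset (Finset.subset_univ V)]; simp
  have hVn : V.card ≤ n := by
    have := Finset.card_le_card (Finset.subset_univ V)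
    simpa using this
  exact ⟨s, by simp at hVcard; omega, hVs⟩

/-- the standard dot-product bilinear form on `Fin n → F` -/
noncomputable def dotB (F : Type) [Field F] (n : ℕ) : LinearMap.BilinForm F (Fin n → F) :=
  LinearMap.mk₂ F (fun x y => ∑ i, x i * y i)
    (by intro x x' y; simp [add_mul, Finset.sum_add_distrib])
    (by intro a x y; simp [Finset.mul_sum, mul_assoc])
    (by intro x y y'; simp [mul_add, Finset.sum_add_distrib])
    (by intro a x y; simp [Finset.mul_sum]; ring_nf; simp [mul_assoc, mul_comm, mul_left_comm])

@[simp] lemma dotB_apply (x y : Fin n → F) : dotB F n x y = ∑ i, x i * y i := rfl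

lemma dualCode_eq_orthogonal (C : Submodule F (Fin n → F)) :
    dualCode C = (dotB F n).orthogonal C := by
  ext y
  simp only [LinearMap.BilinForm.mem_orthogonal_iff]
  rfl

lemma dotB_nondegenerate : (dotB F n).Nondegenerate := by
  refine ⟨?_, ?_⟩ <;> (
  intro x hx
  funext i
  have := hx (Pi.single i 1)
  classical
  simpa [Pi.single_apply, Finset.sum_ite_eq', mul_comm] using this)

lemma dotB_refl : (dotB F n).IsRefl := by
  intro x y h
  simpa [mul_comm] using h

lemma finrank_dualCode (C : Submodule F (Fin n → F)) :
    finrank F (dualCode C) = n - finrank F C := by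
  rw [dualCode_eq_orthogonal]
  rw [LinearMap.BilinForm.finrank_orthogonal dotB_nondegenerate]
  simp [Module.finrank_pi]

/-- mask: zero out the coordinates where `c` is nonzero -/
noncomputable def maskP [DecidableEq F] (c : Fin n → F) : (Fin n → F) →ₗ[F] (Fin n → F) :=
  LinearMap.pi (fun j => if c j = 0 then LinearMap.proj j else 0)

lemma maskP_apply [DecidableEq F] (c x : Fin n → F) (j : Fin n) :
    maskP c x j = if c j = 0 then x j else 0 := by
  simp only [maskP, LinearMap.pi_apply]
  split <;> simp

lemma maskP_self [DecidableEq F] (c : Fin n → F) : maskP c c = 0 := by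
  funext j
  rw [maskP_apply]
  split <;> simp [*]

lemma maskP_of_span [DecidableEq F] {c x : Fin n → F} (hx : x ∈ Submodule.span F {c}) :
    maskP c x = 0 := by
  obtain ⟨a, rfl⟩ := Submodule.mem_span_singleton.mp hx
  rw [map_smul, maskP_self, smul_zero]

lemma Dk_empty (W : Submodule F (Fin n → F)) : Dk W ∅ = finrank F W := by
  have : vanishOn F (∅ : Finset (Fin n)) = ⊤ := by
    rw [Submodule.eq_top_iff']; intro x; simp
  rw [Dk, this, inf_top_eq]

/-- Singleton bound for a code all of whose words vanish on `S`. -/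
lemma singleton_support [DecidableEq F] (W : Submodule F (Fin n → F)) (S : Finset (Fin n))
    (hvan : ∀ w ∈ W, ∀ j ∈ S, w j = 0) (ht : 1 ≤ finrank F W) :
    ∃ z ∈ W, z ≠ 0 ∧ hammingNorm z + finrank F W + S.card ≤ n + 1 := by
  classical
  set t := finrank F W with htdef
  -- the kernel on the complement of S is trivial
  have h0 : Dk W (Finset.univ \ S) = 0 := by
    have : W ⊓ vanishOn F (Finset.univ \ S) = ⊥ := by
      rw [Submodule.eq_bot_iff]
      rintro x ⟨hxW, hxv⟩
      funext j
      by_cases hj : j ∈ S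
      · simpa using hvan x hxW j hj
      · simpa using hxv j (Finset.mem_sdiff.mpr ⟨Finset.mem_univ j, hj⟩)
    rw [Dk, this, finrank_bot]
  have hcardSc : (Finset.univ \ S).card = n - S.card := by
    rw [Finset.card_sdiff_of_subset (Finset.subset_univ S)]; simp
  have htn : t ≤ n - S.card := by
    have h1 := Dk_union_le W ∅ (Finset.univ \ S)
    rw [Dk_empty, Finset.empty_union, h0, hcardSc] at h1
    omega
  have hSn : S.card ≤ n := by
    have := Finset.card_le_card (Finset.subset_univ S); simpa using this
  -- choose t-1 coordinates outside S
  obtain ⟨J, hJsub, hJcard⟩ := Finset.exists_subset_card_eq (s := Finset.univ \ S) (n := t - 1)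
    (by omega)
  have hDkJ : 1 ≤ Dk W J := by
    have h1 := Dk_union_le W ∅ J
    rw [Dk_empty, Finset.empty_union, hJcard] at h1
    omega
  obtain ⟨z, hzW, hz0, hzJ⟩ := Dk_exists_nonzero (C := W) (T := J) hDkJ
  refine ⟨z, hzW, hz0, ?_⟩
  have hsub : ({i | z i ≠ 0} : Finset (Fin n)) ⊆ Finset.univ \ (S ∪ J) := by
    intro i hi
    simp only [Finset.mem_filter, Finset.mem_sdiff, Finset.mem_univ, true_and,
      Finset.mem_union] at *
    rintro (h | h)
    · exact hi (hvan z hzW i h)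
    · exact hi (hzJ i h)
  have hdisj : Disjoint S J := by
    refine Finset.disjoint_left.mpr ?_
    intro a haS haJ
    exact (Finset.mem_sdiff.mp (hJsub haJ)).2 haS
  have hcard : hammingNorm z ≤ n - (S.card + (t - 1)) := by
    calc hammingNorm z = ({i | z i ≠ 0} : Finset (Fin n)).card := rfl
      _ ≤ (Finset.univ \ (S ∪ J)).card := Finset.card_le_card hsub
      _ = n - (S.card + (t - 1)) := by
          rw [Finset.card_sdiff_of_subset (Finset.subset_univ _), Finset.card_union_of_disjoint hdisj,
            hJcard]
          simp
  omega

lemma finrank_mask [DecidableEq F] {C : Submodule F (Fin n → F)} {c : Fin n → F} {dp : ℕ}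
    (hc : c ∈ dualCode C) (hc0 : c ≠ 0)
    (hmin : ∀ y ∈ dualCode C, y ≠ 0 → dp ≤ hammingNorm y) (hcw : hammingNorm c = dp) :
    finrank F ((dualCode C).map (maskP c)) + 1 = finrank F (dualCode C) := by
  classical
  set D := dualCode C with hD
  have hspan_le : Submodule.span F {c} ≤ D := by
    rw [Submodule.span_singleton_le_iff_mem]; exact hc
  let f : D →ₗ[F] (Fin n → F) := (maskP c).comp D.subtype
  have hrange : LinearMap.range f = D.map (maskP c) := by
    rw [LinearMap.range_comp, Submodule.range_subtype]
  have hker : LinearMap.ker f = (Submodule.span F {c}).comap D.subtype := by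
    ext ⟨x, hx⟩
    simp only [LinearMap.mem_ker, Submodule.mem_comap, Submodule.coe_subtype,
      LinearMap.comp_apply, f]
    constructor
    · intro h
      -- x vanishes wherever c vanishes; show x is a multiple of c
      have hxc : ∀ j, c j = 0 → x j = 0 := by
        intro j hj
        have := congrFun h j
        rw [maskP_apply, if_pos hj] at this
        simpa using this
      by_cases hx0 : x = 0
      · simp [hx0]
      · obtain ⟨i0, hi0⟩ : ∃ i0, x i0 ≠ 0 := by
          by_contra hh; push_neg at hh; exact hx0 (funext fun i => hh i)
        have hci0 : c i0 ≠ 0 := fun h' => hi0 (hxc i0 h')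
        set a : F := x i0 / c i0 with ha
        set y : Fin n → F := x - a • c with hy
        have hyD : y ∈ D := D.sub_mem hx (D.smul_mem a hc)
        have hyi0 : y i0 = 0 := by
          simp only [hy, Pi.sub_apply, Pi.smul_apply, smul_eq_mul, ha]
          field_simp
          simp
        have hysupp : ({i | y i ≠ 0} : Finset (Fin n)) ⊆ ({i | c i ≠ 0} : Finset (Fin n)) \ {i0} := by
          intro i hi
          simp only [Finset.mem_filter, Finset.mem_sdiff, Finset.mem_univ, true_and,
            Finset.mem_singleton] at *
          constructor
          · intro hci
            apply hi
            show (x - a • c) i = 0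
            simp [hxc i hci, hci]
          · intro h'
            subst h'
            exact hi hyi0
        have hycard : hammingNorm y < dp := by
          have h1 : (({i | c i ≠ 0} : Finset (Fin n)) \ {i0}).card < dp := by
            rw [← hcw]
            have : i0 ∈ ({i | c i ≠ 0} : Finset (Fin n)) := by
              simp only [Finset.mem_filter, Finset.mem_univ, true_and]; exact hci0
            calc (({i | c i ≠ 0} : Finset (Fin n)) \ {i0}).card
                < ({i | c i ≠ 0} : Finset (Fin n)).card := by
                  apply Finset.card_lt_card
                  rw [Finset.ssubset_iff_of_subset (Finset.sdiff_subset)]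
                  exact ⟨i0, this, by simp⟩
              _ = hammingNorm c := rfl
            
          exact lt_of_le_of_lt (Finset.card_le_card hysupp) h1
        have hy0 : y = 0 := by
          by_contra hy0
          exact absurd (hmin y hyD hy0) (by omega)
        have : x = a • c := by
          have := sub_eq_zero.mp hy0
          simpa [hy] using this
        rw [this]
        exact Submodule.smul_mem _ a (Submodule.mem_span_singleton_self c)
    · intro h
      exact maskP_of_span h
  have h1 : finrank F (LinearMap.range f) + finrank F (LinearMap.ker f) = finrank F D :=
    LinearMap.finrank_range_add_finrank_ker f
  have h2 : finrank F (LinearMap.ker f) = 1 := by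
    rw [hker, (Submodule.comapSubtypeEquivOfLe hspan_le).finrank_eq]
    exact finrank_span_singleton hc0
  rw [hrange, h2] at h1
  exact h1

lemma averaging [Fintype F] [DecidableEq F] {C : Submodule F (Fin n → F)} {c x : Fin n → F}
    {dp : ℕ} (hmin : ∀ y ∈ dualCode C, y ≠ 0 → dp ≤ hammingNorm y)
    (hc : c ∈ dualCode C) (hcw : hammingNorm c = dp)
    (hx : x ∈ dualCode C) (hxs : x ∉ Submodule.span F {c}) :
    dp ≤ Fintype.card F * hammingNorm (maskP c x) := by
  classical
  set q := Fintype.card F with hq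
  -- each translate x - a • c is a nonzero codeword
  have key : ∀ a : F, dp ≤ hammingNorm (x - a • c) := by
    intro a
    apply hmin _ ((dualCode C).sub_mem hx ((dualCode C).smul_mem a hc))
    intro h
    exact hxs (by
      rw [sub_eq_zero] at h
      rw [h]
      exact Submodule.smul_mem _ a (Submodule.mem_span_singleton_self c))
  have hsum1 : q * dp ≤ ∑ a : F, hammingNorm (x - a • c) := by
    have := Finset.card_nsmul_le_sum Finset.univ (fun a : F => hammingNorm (x - a • c)) dp
      (fun a _ => key a)
    simpa [hq, smul_eq_mul] using this
  -- compute the sum coordinatewise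
  have hcount : ∀ i : Fin n, (Finset.univ.filter (fun a : F => x i - a * c i ≠ 0)).card
      = if c i = 0 then (if x i = 0 then 0 else q) else q - 1 := by
    intro i
    by_cases hci : c i = 0
    · rw [if_pos hci]
      by_cases hxi : x i = 0
      · rw [if_pos hxi]
        simp [hci, hxi]
      · rw [if_neg hxi]
        have : (Finset.univ.filter (fun a : F => x i - a * c i ≠ 0)) = Finset.univ := by
          ext a; simp [hci, hxi, sub_eq_zero]
        rw [this]; simp [hq]
    · rw [if_neg hci]
      have hcompl : (Finset.univ.filter (fun a : F => ¬(x i - a * c i ≠ 0))) = {x i / c i} := by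
        ext a
        simp only [Finset.mem_filter, Finset.mem_univ, true_and, not_not,
          Finset.mem_singleton, sub_eq_zero]
        constructor
        · intro h; rw [eq_div_iff hci, h]
        · intro h; subst h; field_simp
      have := Finset.card_filter_add_card_filter_not
        (s := (Finset.univ : Finset F)) (p := fun a : F => x i - a * c i ≠ 0)
      rw [hcompl] at this
      simp only [Finset.card_singleton, Finset.card_univ] at this
      omega
  have hsum2 : ∑ a : F, hammingNorm (x - a • c)
      = ∑ i : Fin n, (if c i = 0 then (if x i = 0 then 0 else q) else q - 1) := by
    have h1 : ∀ a : F, hammingNorm (x - a • c)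
        = ∑ i : Fin n, (if x i - a * c i ≠ 0 then 1 else 0) := by
      intro a
      rw [hammingNorm, Finset.card_filter]
      congr 1
    calc ∑ a : F, hammingNorm (x - a • c)
        = ∑ a : F, ∑ i : Fin n, (if x i - a * c i ≠ 0 then 1 else 0) := by
          refine Finset.sum_congr rfl fun a _ => ?_
          rw [hammingNorm, Finset.card_filter]
          refine Finset.sum_congr rfl fun i _ => ?_
          simp [Pi.sub_apply, Pi.smul_apply, smul_eq_mul]
      _ = ∑ i : Fin n, ∑ a : F, (if x i - a * c i ≠ 0 then 1 else 0) := Finset.sum_comm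
      _ = ∑ i : Fin n, (if c i = 0 then (if x i = 0 then 0 else q) else q - 1) := by
          refine Finset.sum_congr rfl fun i _ => ?_
          rw [← hcount i, Finset.card_filter]
  -- evaluate the coordinatewise sum
  have hmask : hammingNorm (maskP c x)
      = (Finset.univ.filter (fun i : Fin n => c i = 0 ∧ x i ≠ 0)).card := by
    rw [hammingNorm]
    congr 1
    ext i
    simp only [Finset.mem_filter, Finset.mem_univ, true_and, maskP_apply]
    by_cases hci : c i = 0 <;> simp [hci]
  have hsum3 : ∑ i : Fin n, (if c i = 0 then (if x i = 0 then 0 else q) else q - 1)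
      = q * hammingNorm (maskP c x) + (q - 1) * dp := by
    rw [← Finset.sum_filter_add_sum_filter_not Finset.univ (fun i : Fin n => c i = 0)]
    have hA : ∑ i ∈ Finset.univ.filter (fun i : Fin n => c i = 0),
        (if c i = 0 then (if x i = 0 then 0 else q) else q - 1)
        = q * hammingNorm (maskP c x) := by
      rw [hmask]
      rw [Finset.sum_congr rfl (fun i hi => by
        rw [if_pos (Finset.mem_filter.mp hi).2])]
      rw [Finset.sum_ite, Finset.sum_const, Finset.sum_const]
      simp only [smul_eq_mul, mul_zero, zero_add, Finset.filter_filter]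
      rw [mul_comm]
    have hB : ∑ i ∈ Finset.univ.filter (fun i : Fin n => ¬c i = 0),
        (if c i = 0 then (if x i = 0 then 0 else q) else q - 1)
        = (q - 1) * dp := by
      rw [Finset.sum_congr rfl (fun i hi => by
        rw [if_neg (Finset.mem_filter.mp hi).2])]
      rw [Finset.sum_const, smul_eq_mul, mul_comm]
      have he : #(Finset.filter (fun i => ¬c i = 0) Finset.univ) = hammingNorm c := rfl
      rw [he, hcw]
    rw [hA, hB]
  rw [hsum2, hsum3] at hsum1
  -- conclude
  have hq1 : 1 ≤ q := Fintype.card_pos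
  have h5 : (q - 1) * dp + dp = q * dp := by
    have := Nat.succ_pred_eq_of_pos hq1
    nlinarith [Nat.sub_add_cancel hq1]
  omega

lemma partA [Fintype F] [DecidableEq F] {C : Submodule F (Fin n → F)} {k dperp : ℕ}
    (hk : finrank F C = k) (hkn2 : k + 2 ≤ n) (hdperp : IsMinDist (dualCode C) dperp) :
    dperp + Fintype.card F * dperp ≤ Fintype.card F * (k + 2) := by
  classical
  have hdual : finrank F (dualCode C) = n - k := by rw [finrank_dualCode, hk]
  obtain ⟨c, hc, hc0, hcw⟩ := hdperp.2
  set W : Submodule F (Fin n → F) := (dualCode C).map (maskP c) with hWdef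
  have hW : finrank F W + 1 = n - k := by
    rw [← hdual]; exact finrank_mask hc hc0 hdperp.1 hcw
  have hWrank : finrank F W = n - k - 1 := by omega
  set S : Finset (Fin n) := {i | c i ≠ 0} with hSdef
  have hScard : S.card = dperp := hcw
  have hvan : ∀ w ∈ W, ∀ j ∈ S, w j = 0 := by
    rintro w ⟨x, hx, rfl⟩ j hj
    rw [maskP_apply]
    rw [if_neg]
    simp only [hSdef, Finset.mem_filter, Finset.mem_univ, true_and] at hj
    exact hj
  obtain ⟨z, hzW, hz0, hzbound⟩ := singleton_support W S hvan (by omega)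
  obtain ⟨x, hx, hzx⟩ := hzW
  have hxs : x ∉ Submodule.span F {c} := by
    intro h
    exact hz0 (by rw [← hzx]; exact maskP_of_span h)
  have havg : dperp ≤ Fintype.card F * hammingNorm z := by
    rw [← hzx]
    exact averaging hdperp.1 hc hcw hx hxs
  rw [hWrank, hScard] at hzbound
  have h6 : hammingNorm z + dperp ≤ k + 2 := by omega
  have h7 : Fintype.card F * (hammingNorm z + dperp) ≤ Fintype.card F * (k + 2) :=
    Nat.mul_le_mul_left _ h6
  have h8 : Fintype.card F * (hammingNorm z + dperp)
      = Fintype.card F * hammingNorm z + Fintype.card F * dperp := by ring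
  omega

/-- Dual distance bound: if `C ≤ F_q^n` is an LRC code of dimension `2 ≤ k ≤ n − 2`,
minimum distance `d`, locality `r`, and dual distance `d⊥`, then
`d⊥ + (d⊥ − q)/q ≤ n − d + 3 − ⌈k/r⌉`. -/
theorem stmt_11 {F : Type} [Field F] [Fintype F] [DecidableEq F] {n : ℕ}
    (C : Submodule F (Fin n → F)) (hC : C ≠ ⊥)
    (r k d dperp : ℕ) (hloc : HasLocality C r)
    (hk : Module.finrank F C = k) (hk2 : 2 ≤ k) (hkn : k ≤ n - 2)
    (hd : IsMinDist C d) (hdperp : IsMinDist (dualCode C) dperp) :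
    (dperp : ℝ) + ((dperp : ℝ) - (Fintype.card F : ℝ)) / (Fintype.card F : ℝ)
      ≤ (n : ℝ) - (d : ℝ) + 3 - (⌈(k : ℝ) / (r : ℝ)⌉ : ℝ) := by
  have hkn2 : k + 2 ≤ n := by omega
  have hr : 1 ≤ r := locality_r_pos hC hloc
  have hA := partA hk hkn2 hdperp
  obtain ⟨s, hs1, hs2⟩ := partB hC hloc hk hk2 hd
  set q : ℕ := Fintype.card F with hq
  have hq0 : (0 : ℝ) < (q : ℝ) := by
    have : 0 < q := Fintype.card_pos
    exact_mod_cast this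
  have hAr : (dperp : ℝ) + (q : ℝ) * dperp ≤ (q : ℝ) * ((k : ℝ) + 2) := by
    have := hA
    push_cast at *
    exact_mod_cast this
  have hs1r : (d : ℝ) + (k : ℝ) + (s : ℝ) ≤ (n : ℝ) + 1 := by exact_mod_cast hs1
  have hr0 : (0 : ℝ) < (r : ℝ) := by exact_mod_cast hr
  have hceil : (⌈(k : ℝ) / (r : ℝ)⌉ : ℝ) ≤ (s : ℝ) + 1 := by
    have h1 : (k : ℝ) / (r : ℝ) ≤ ((s : ℤ) + 1 : ℤ) := by
      rw [div_le_iff₀ hr0]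
      push_cast
      have : (k : ℝ) ≤ (r : ℝ) * s + r := by exact_mod_cast hs2
      linarith
    have h2 : ⌈(k : ℝ) / (r : ℝ)⌉ ≤ (s : ℤ) + 1 := Int.ceil_le.mpr h1
    have h3 : ((⌈(k : ℝ) / (r : ℝ)⌉ : ℤ) : ℝ) ≤ (((s : ℤ) + 1 : ℤ) : ℝ) := by
      exact_mod_cast h2
    push_cast at h3
    exact h3
  have hdiv : ((dperp : ℝ) - (q : ℝ)) / (q : ℝ) = (dperp : ℝ) / (q : ℝ) - 1 := by
    rw [sub_div, div_self (ne_of_gt hq0)]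
  have h1 : (dperp : ℝ) / (q : ℝ) ≤ ((k : ℝ) + 2) - (dperp : ℝ) := by
    rw [div_le_iff₀ hq0]
    nlinarith
  rw [hdiv]
  linarith
end
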